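/- arXiv:2601.21951 — 4 statements merged into one kernel-verified Lean document; each statement's English description precedes it below -/
import Mathlib

section
/- Let π, ν be smooth positive probability densities on ℝ^d and λ ∈ (0,1). Define μ(x) = ∫ λ^{-d/2} (1-λ)^{-d/2} ν(u/√(1-λ)) π((x-u)/√λ) du and the posterior ϱ_x(y) ∝ ν((x - √λ y)/√(1-λ)) π(y). Then ∇ log μ(x) = E_{Y∼ϱ_x}[λ^{-1/2} ∇ log π(Y)] (the target score identity). -/
open MeasureTheory Real
open InnerProductSpace

noncomputable section


variable {d : ℕ}

abbrev E (d : ℕ) := EuclideanSpace ℝ (Fin d)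

-- change of variables
lemma cov {F : Type*} [NormedAddCommGroup F] [NormedSpace ℝ F]
    (s : ℝ) (hs : 0 < s) (x : E d) (f : E d → F) :
    ∫ u, f u = s ^ d • ∫ y, f (x - s • y) := by
  have h1 : ∫ y, (fun z => f (x - z)) (s • y) = ((s ^ (Module.finrank ℝ (E d)))⁻¹ : ℝ) • ∫ z, f (x - z) :=
    Measure.integral_comp_smul_of_nonneg volume (fun z => f (x - z)) s (hR := hs.le)
  have h2 : ∫ z, f (x - z) = ∫ z, f z := integral_sub_left_eq_self f volume x
  rw [show (fun y => f (x - s • y)) = fun y => (fun z => f (x - z)) (s • y) from rfl, h1, h2,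
    finrank_euclideanSpace_fin, smul_smul]
  rw [mul_inv_cancel₀ (pow_pos hs d).ne', one_smul]

lemma gradlog {f : E d → ℝ} {y : E d} (hf : DifferentiableAt ℝ f y) (hfy : f y ≠ 0) :
    HasGradientAt (fun z => Real.log (f z)) ((f y)⁻¹ • gradient f y) y := by
  have h1 : HasFDerivAt f (toDual ℝ (E d) (gradient f y)) y := hf.hasGradientAt.hasFDerivAt
  have h2 := (Real.hasDerivAt_log hfy).comp_hasFDerivAt y h1
  have h3 : HasGradientAt (fun z => Real.log (f z))
      ((toDual ℝ (E d)).symm ((f y)⁻¹ • toDual ℝ (E d) (gradient f y))) y := by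
    exact hasFDerivAt_iff_hasGradientAt.1 h2
  simpa [gradient] using h3

lemma gradaff {p : E d → ℝ} (hp : Differentiable ℝ p) (a s : ℝ) (u x : E d) :
    HasGradientAt (fun x' => a * p (s⁻¹ • (x' - u)))
      ((a * s⁻¹) • gradient p (s⁻¹ • (x - u))) x := by
  set pt := s⁻¹ • (x - u) with hpt
  have hA : HasFDerivAt (fun x' : E d => s⁻¹ • (x' - u))
      (s⁻¹ • ContinuousLinearMap.id ℝ (E d)) x := ((hasFDerivAt_id x).sub_const u).const_smul s⁻¹
  have hp1 : HasFDerivAt p (toDual ℝ (E d) (gradient p pt)) pt :=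
    (hp pt).hasGradientAt.hasFDerivAt
  have h2 : HasFDerivAt (fun x' => p (s⁻¹ • (x' - u)))
      ((toDual ℝ (E d) (gradient p pt)).comp (s⁻¹ • ContinuousLinearMap.id ℝ (E d))) x :=
    hp1.comp x hA
  have h3 := h2.const_mul a
  have h4 : (a • (toDual ℝ (E d) (gradient p pt)).comp (s⁻¹ • ContinuousLinearMap.id ℝ (E d)))
      = toDual ℝ (E d) ((a * s⁻¹) • gradient p pt) := by
    ext v; simp [mul_comm, mul_assoc, real_inner_smul_left]
  rw [h4] at h3
  simpa [gradient] using hasFDerivAt_iff_hasGradientAt.1 h3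

/-- **Target score identity.** -/
theorem target_score_identity
    (d : ℕ) (l : ℝ) (hl : l ∈ Set.Ioo (0 : ℝ) 1)
    (ν p : EuclideanSpace ℝ (Fin d) → ℝ)
    (hν : ContDiff ℝ (⊤ : ℕ∞) ν) (hp : ContDiff ℝ (⊤ : ℕ∞) p)
    (hνpos : ∀ x, 0 < ν x) (hppos : ∀ x, 0 < p x)
    (hνprob : ∫ x, ν x = 1) (hpprob : ∫ x, p x = 1)
    (μ : EuclideanSpace ℝ (Fin d) → ℝ)
    (hμ : ∀ x, μ x =
      ∫ u, l ^ (-(d : ℝ) / 2) * (1 - l) ^ (-(d : ℝ) / 2) *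
        ν ((Real.sqrt (1 - l))⁻¹ • u) * p ((Real.sqrt l)⁻¹ • (x - u)))
    (ϱ : EuclideanSpace ℝ (Fin d) → EuclideanSpace ℝ (Fin d) → ℝ)
    -- the posterior ϱ_x(y) ∝ ν((x - √λ y)/√(1-λ)) π(y), normalised:
    (hϱprop : ∀ x, ∃ c : ℝ, 0 < c ∧ ∀ y, ϱ x y =
      c * ν ((Real.sqrt (1 - l))⁻¹ • (x - Real.sqrt l • y)) * p y)
    (hϱprob : ∀ x, ∫ y, ϱ x y = 1)
    (x : EuclideanSpace ℝ (Fin d))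
    -- differentiation under the integral sign and change of variables are valid:
    (hswap : gradient μ x =
      ∫ u, gradient (fun x' => l ^ (-(d : ℝ) / 2) * (1 - l) ^ (-(d : ℝ) / 2) *
        ν ((Real.sqrt (1 - l))⁻¹ • u) * p ((Real.sqrt l)⁻¹ • (x' - u))) x)
    (hint : Integrable (fun y => ϱ x y •
      ((Real.sqrt l)⁻¹ • gradient (fun z => Real.log (p z)) y))) :
    gradient (fun z => Real.log (μ z)) x =
      ∫ y, ϱ x y • ((Real.sqrt l)⁻¹ • gradient (fun z => Real.log (p z)) y) := by
  obtain ⟨hl0, hl1⟩ := hl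
  set s := Real.sqrt l with hsdef
  have hs : 0 < s := Real.sqrt_pos.2 hl0
  set C := l ^ (-(d : ℝ) / 2) * (1 - l) ^ (-(d : ℝ) / 2) with hCdef
  have hC : 0 < C := mul_pos (Real.rpow_pos_of_pos hl0 _)
    (Real.rpow_pos_of_pos (by linarith) _)
  have hpdiff : Differentiable ℝ p := hp.differentiable (by simp)
  -- value of μ
  have hμval : ∀ z c', 0 < c' →
      (∀ y, ϱ z y = c' * ν ((Real.sqrt (1 - l))⁻¹ • (z - s • y)) * p y) →
      μ z = s ^ d * C / c' := by
    intro z c' hc' hz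
    have h1 := hϱprob z
    simp_rw [hz, mul_assoc] at h1
    rw [integral_const_mul] at h1
    have hJ : ∫ y, ν ((Real.sqrt (1 - l))⁻¹ • (z - s • y)) * p y = c'⁻¹ := by
      field_simp at h1 ⊢; linarith
    rw [hμ z, cov s hs z]
    simp_rw [sub_sub_cancel, smul_smul, inv_mul_cancel₀ hs.ne', one_smul]
    simp_rw [mul_assoc]
    rw [integral_const_mul, hJ, smul_eq_mul]
    ring
  have hμpos : ∀ z, 0 < μ z := by
    intro z
    obtain ⟨c', hc', hz⟩ := hϱprop z
    rw [hμval z c' hc' hz]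
    positivity
  obtain ⟨c, hc, hcx⟩ := hϱprop x
  set I := ∫ y, ν ((Real.sqrt (1 - l))⁻¹ • (x - s • y)) • gradient p y with hI
  -- RHS
  have hRHS : ∫ y, ϱ x y • (s⁻¹ • gradient (fun z => Real.log (p z)) y)
      = (c * s⁻¹) • I := by
    have heq : (fun y => ϱ x y • (s⁻¹ • gradient (fun z => Real.log (p z)) y))
        = fun y => (c * s⁻¹) • (ν ((Real.sqrt (1 - l))⁻¹ • (x - s • y)) • gradient p y) := by
      funext y
      rw [(gradlog (hpdiff y) (hppos y).ne').gradient, hcx y,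
        smul_smul, smul_smul, smul_smul]
      congr 1
      have hpy := (hppos y).ne'
      field_simp
    rw [heq, integral_smul]
  -- gradient of μ
  have hgradμ : gradient μ x = (s ^ d * (C * s⁻¹)) • I := by
    rw [hswap]
    have hH : ∀ u, gradient (fun x' => l ^ (-(d : ℝ) / 2) * (1 - l) ^ (-(d : ℝ) / 2) *
        ν ((Real.sqrt (1 - l))⁻¹ • u) * p (s⁻¹ • (x' - u))) x
        = ((l ^ (-(d : ℝ) / 2) * (1 - l) ^ (-(d : ℝ) / 2) * ν ((Real.sqrt (1 - l))⁻¹ • u))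
            * s⁻¹) • gradient p (s⁻¹ • (x - u)) :=
      fun u => (gradaff hpdiff _ s u x).gradient
    rw [← hCdef] at hH; simp_rw [hH]
    rw [cov s hs x]
    simp_rw [sub_sub_cancel, smul_smul (s:ℝ)⁻¹ s, inv_mul_cancel₀ hs.ne', one_smul]
    have heq2 : (fun y => (C * ν ((Real.sqrt (1 - l))⁻¹ • (x - s • y)) * s⁻¹) •
        gradient p y)
        = fun y => (C * s⁻¹) • (ν ((Real.sqrt (1 - l))⁻¹ • (x - s • y)) • gradient p y) := by
      funext y; rw [smul_smul]; congr 1; ring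
    rw [heq2, integral_smul, smul_smul]
  by_cases hdiff : DifferentiableAt ℝ μ x
  · rw [(gradlog hdiff (hμpos x).ne').gradient, hRHS, hgradμ,
      hμval x c hc hcx, smul_smul]
    congr 1
    have h1 : (0:ℝ) < s ^ d := pow_pos hs d
    field_simp
  · have h0 : gradient μ x = 0 := gradient_eq_zero_of_not_differentiableAt hdiff
    rw [h0] at hgradμ
    have hI0 : I = 0 := by
      rcases smul_eq_zero.1 hgradμ.symm with h | h
      · exact absurd h (by positivity)
      · exact h
    have hnd : ¬ DifferentiableAt ℝ (fun z => Real.log (μ z)) x := by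
      intro hcon
      apply hdiff
      have hrw : μ = fun z => Real.exp (Real.log (μ z)) :=
        funext fun z => (Real.exp_log (hμpos z)).symm
      rw [hrw]
      exact (Real.differentiable_exp _).comp x hcon
    rw [gradient_eq_zero_of_not_differentiableAt hnd, hRHS, hI0, smul_zero]
end
end

section
/- With μ_t and ϱ_{t,x} as in the diffusion path construction, for a sufficiently smooth vector-valued test function φ, E_{X∼μ_t} E_{Y∼ϱ_{t,X}}[⟨φ((X - √λ_t Y)/√(1-λ_t)), ∇ log ϱ_{t,X}(Y)⟩] = −√(λ_t/(1-λ_t)) · E_{Z∼ν}[⟨φ(Z), ∇ log ν(Z)⟩]. -/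
open MeasureTheory Real

noncomputable section

/-- Divergence of a vector field on Euclidean space. -/
def vdiv {d : ℕ} (φ : EuclideanSpace ℝ (Fin d) → EuclideanSpace ℝ (Fin d))
    (y : EuclideanSpace ℝ (Fin d)) : ℝ :=
  ∑ i : Fin d, fderiv ℝ φ y (EuclideanSpace.single i 1) i

lemma vdiv_continuous {d : ℕ} {φ : EuclideanSpace ℝ (Fin d) → EuclideanSpace ℝ (Fin d)}
    (hφ : ContDiff ℝ 1 φ) : Continuous (vdiv φ) := by
  unfold vdiv
  refine continuous_finset_sum _ fun i _ => ?_
  have h1 : Continuous (fderiv ℝ φ) := hφ.continuous_fderiv one_ne_zero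
  have h2 : Continuous fun y => fderiv ℝ φ y (EuclideanSpace.single i 1) :=
    (ContinuousLinearMap.apply ℝ (EuclideanSpace ℝ (Fin d))
      (EuclideanSpace.single i 1)).continuous.comp h1
  exact (EuclideanSpace.proj i).continuous.comp h2

lemma vdiv_comp {d : ℕ} {φ : EuclideanSpace ℝ (Fin d) → EuclideanSpace ℝ (Fin d)}
    (hφ : ContDiff ℝ 1 φ) (a : EuclideanSpace ℝ (Fin d)) (r : ℝ) (y : EuclideanSpace ℝ (Fin d)) :
    vdiv (fun y' => φ (a + r • y')) y = r * vdiv φ (a + r • y) := by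
  have hm : HasFDerivAt (fun y' : EuclideanSpace ℝ (Fin d) => a + r • y')
      (r • ContinuousLinearMap.id ℝ (EuclideanSpace ℝ (Fin d))) y :=
    ((hasFDerivAt_id y).const_smul r).const_add a
  have hc : HasFDerivAt (fun y' => φ (a + r • y'))
      ((fderiv ℝ φ (a + r • y)).comp
        (r • ContinuousLinearMap.id ℝ (EuclideanSpace ℝ (Fin d)))) y :=
    ((hφ.differentiable one_ne_zero (a + r • y)).hasFDerivAt).comp y hm
  unfold vdiv
  rw [hc.fderiv]
  simp only [ContinuousLinearMap.coe_comp', Function.comp_apply,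
    ContinuousLinearMap.smul_apply, ContinuousLinearMap.coe_id', id_eq, _root_.map_smul,
    PiLp.smul_apply, smul_eq_mul]
  exact (Finset.mul_sum _ _ _).symm

/-- **Double-expectation Stein identity (base form).** -/
theorem double_expectation_base_identity
    (d : ℕ) (l : ℝ) (hl : l ∈ Set.Ioo (0 : ℝ) 1)
    (ν p : EuclideanSpace ℝ (Fin d) → ℝ)
    (hν : ContDiff ℝ (⊤ : ℕ∞) ν) (hp : ContDiff ℝ (⊤ : ℕ∞) p)
    (hνpos : ∀ z, 0 < ν z) (hppos : ∀ z, 0 < p z)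
    (hνprob : ∫ z, ν z = 1) (hpprob : ∫ z, p z = 1)
    (μ : EuclideanSpace ℝ (Fin d) → ℝ)
    (hμ : ∀ x, μ x =
      ∫ y, (1 - l) ^ (-(d : ℝ) / 2) *
        ν ((Real.sqrt (1 - l))⁻¹ • (x - Real.sqrt l • y)) * p y)
    (ϱ : EuclideanSpace ℝ (Fin d) → EuclideanSpace ℝ (Fin d) → ℝ)
    (hϱ : ∀ x y, ϱ x y =
      (1 - l) ^ (-(d : ℝ) / 2) *
        ν ((Real.sqrt (1 - l))⁻¹ • (x - Real.sqrt l • y)) * p y / μ x)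
    (φ : EuclideanSpace ℝ (Fin d) → EuclideanSpace ℝ (Fin d))
    (hφ : ContDiff ℝ 1 φ)
    -- Stein's lemma applies to every ϱ_x with the shifted test field,
    -- and to the base density ν with φ itself
    (hSteinϱ : ∀ x, (∫ y, ϱ x y *
        (inner ℝ (φ ((Real.sqrt (1 - l))⁻¹ • (x - Real.sqrt l • y)))
          (gradient (fun z => Real.log (ϱ x z)) y) : ℝ)) =
      -∫ y, ϱ x y *
        vdiv (fun y' => φ ((Real.sqrt (1 - l))⁻¹ • (x - Real.sqrt l • y'))) y)
    (hSteinν : (∫ z, ν z * (inner ℝ (φ z)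
        (gradient (fun w => Real.log (ν w)) z) : ℝ)) =
      -∫ z, ν z * vdiv φ z)
    -- suitable integrability
    (hint1 : Integrable (fun x => μ x * ∫ y, ϱ x y *
      (inner ℝ (φ ((Real.sqrt (1 - l))⁻¹ • (x - Real.sqrt l • y)))
        (gradient (fun z => Real.log (ϱ x z)) y) : ℝ)))
    (hint2 : Integrable (fun z => ν z * (inner ℝ (φ z)
      (gradient (fun w => Real.log (ν w)) z) : ℝ)))
    (hdivint : Integrable (fun z => ν z * |vdiv φ z|)) :
    (∫ x, μ x * ∫ y, ϱ x y *
        (inner ℝ (φ ((Real.sqrt (1 - l))⁻¹ • (x - Real.sqrt l • y)))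
          (gradient (fun z => Real.log (ϱ x z)) y) : ℝ)) =
      -(Real.sqrt (l / (1 - l))) *
        ∫ z, ν z * (inner ℝ (φ z)
          (gradient (fun w => Real.log (ν w)) z) : ℝ) := by
  obtain ⟨hl0, hl1⟩ := hl
  have h1l : (0:ℝ) < 1 - l := by linarith
  have hspos : 0 < Real.sqrt l := Real.sqrt_pos.2 hl0
  have htpos : 0 < Real.sqrt (1 - l) := Real.sqrt_pos.2 h1l
  set s := Real.sqrt l with hsdef
  set t := Real.sqrt (1 - l) with htdef
  set k : ℝ := (1 - l) ^ (-(d:ℝ)/2) with hkdef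
  have hkpos : 0 < k := Real.rpow_pos_of_pos h1l _
  have ht2 : t ^ d = (1 - l) ^ ((d : ℝ) / 2) := by
    rw [← Real.rpow_natCast t d, htdef, Real.sqrt_eq_rpow, ← Real.rpow_mul h1l.le]
    congr 1; ring
  have htd : k * t ^ d = 1 := by
    have hz : -(d:ℝ)/2 + (d:ℝ)/2 = 0 := by ring
    rw [ht2, hkdef, ← Real.rpow_add h1l, hz, Real.rpow_zero]
  -- continuity / basic integrability
  have hνc : Continuous ν := hν.continuous
  have hpc : Continuous p := hp.continuous
  have hhc : Continuous (vdiv φ) := vdiv_continuous hφ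
  have hνint : Integrable ν := integrable_of_integral_eq_one hνprob
  have hpint : Integrable p := integrable_of_integral_eq_one hpprob
  set F : EuclideanSpace ℝ (Fin d) → ℝ := fun z => ν z * vdiv φ z with hFdef
  have hFc : Continuous F := hνc.mul hhc
  have hFint : Integrable F := by
    refine hdivint.mono' hFc.aestronglyMeasurable
      (Filter.Eventually.of_forall fun z => le_of_eq ?_)
    rw [hFdef]
    simp only [Real.norm_eq_abs, abs_mul, abs_of_pos (hνpos z)]
  -- change of variables in x, for fixed y
  have hCoV : ∀ (F' : EuclideanSpace ℝ (Fin d) → ℝ) (b : EuclideanSpace ℝ (Fin d)),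
      (∫ x, F' (t⁻¹ • (x - s • b))) = t ^ d * ∫ z, F' z := by
    intro F' b
    have h1 : (fun x : EuclideanSpace ℝ (Fin d) => F' (t⁻¹ • (x - s • b)))
        = fun x => (fun u => F' (t⁻¹ • u)) (x + (-(s • b))) := by
      funext x; rw [sub_eq_add_neg]
    rw [h1, integral_add_right_eq_self (fun u => F' (t⁻¹ • u)) (-(s • b)),
      MeasureTheory.Measure.integral_comp_smul volume F' t⁻¹]
    rw [finrank_euclideanSpace_fin, smul_eq_mul, inv_pow, inv_inv,
      abs_of_pos (pow_pos htpos d)]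
  have hCoVI : ∀ (F' : EuclideanSpace ℝ (Fin d) → ℝ), Integrable F' →
      ∀ b : EuclideanSpace ℝ (Fin d), Integrable (fun x => F' (t⁻¹ • (x - s • b))) := by
    intro F' hF' b
    have h1 : Integrable (fun u : EuclideanSpace ℝ (Fin d) => F' (t⁻¹ • u)) :=
      hF'.comp_smul (inv_ne_zero htpos.ne')
    have h2 := h1.comp_add_right (-(s • b))
    simpa [sub_eq_add_neg] using h2
  -- product integrability
  have hGint : ∀ (F' : EuclideanSpace ℝ (Fin d) → ℝ), Continuous F' → Integrable F' →
      Integrable (Function.uncurry fun x y : EuclideanSpace ℝ (Fin d) =>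
        (k * p y) * F' (t⁻¹ • (x - s • y))) (volume.prod volume) := by
    intro F' hF'c hF'i
    have hmeas : AEStronglyMeasurable (Function.uncurry fun x y : EuclideanSpace ℝ (Fin d) =>
        (k * p y) * F' (t⁻¹ • (x - s • y))) (volume.prod volume) := by
      apply Continuous.aestronglyMeasurable
      show Continuous fun q : EuclideanSpace ℝ (Fin d) × EuclideanSpace ℝ (Fin d) =>
        (k * p q.2) * F' (t⁻¹ • (q.1 - s • q.2))
      exact (continuous_const.mul (hpc.comp continuous_snd)).mul
        (hF'c.comp ((continuous_fst.sub (continuous_snd.const_smul s)).const_smul t⁻¹))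
    rw [integrable_prod_iff' hmeas]
    simp only [Function.uncurry_apply_pair]
    constructor
    · exact Filter.Eventually.of_forall fun y => (hCoVI F' hF'i y).const_mul _
    · have heq : (fun y : EuclideanSpace ℝ (Fin d) =>
          ∫ x, ‖(k * p y) * F' (t⁻¹ • (x - s • y))‖) =
          fun y => (k * (t ^ d * ∫ z, |F' z|)) * p y := by
        funext y
        have h3 : ∀ x : EuclideanSpace ℝ (Fin d),
            ‖(k * p y) * F' (t⁻¹ • (x - s • y))‖
              = (k * p y) * |F' (t⁻¹ • (x - s • y))| := by
          intro x
          rw [Real.norm_eq_abs, abs_mul, abs_of_pos (mul_pos hkpos (hppos y))]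
        simp_rw [h3]
        rw [MeasureTheory.integral_const_mul, hCoV (fun z => |F' z|) y]
        ring
      rw [heq]
      exact hpint.const_mul _
  have hJ0 : Integrable (Function.uncurry fun x y : EuclideanSpace ℝ (Fin d) =>
      (k * p y) * ν (t⁻¹ • (x - s • y))) (volume.prod volume) := hGint ν hνc hνint
  have hG : Integrable (Function.uncurry fun x y : EuclideanSpace ℝ (Fin d) =>
      (k * p y) * F (t⁻¹ • (x - s • y))) (volume.prod volume) := hGint F hFc hFint
  -- a.e. positivity of μ
  have hμae : ∀ᵐ x : EuclideanSpace ℝ (Fin d), 0 < μ x := by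
    filter_upwards [hJ0.prod_right_ae] with x hx
    rw [hμ x]
    have hint : Integrable (fun y : EuclideanSpace ℝ (Fin d) =>
        k * ν (t⁻¹ • (x - s • y)) * p y) := by
      refine hx.congr (Filter.Eventually.of_forall fun y => ?_)
      simp only [Function.uncurry]
      ring
    refine (integral_pos_iff_support_of_nonneg (fun y => ?_) hint).2 ?_
    · exact le_of_lt (mul_pos (mul_pos hkpos (hνpos _)) (hppos _))
    · have hsupp : Function.support (fun y : EuclideanSpace ℝ (Fin d) =>
          k * ν (t⁻¹ • (x - s • y)) * p y) = Set.univ := by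
        refine Set.eq_univ_iff_forall.2 fun y => ?_
        exact (mul_pos (mul_pos hkpos (hνpos _)) (hppos _)).ne'
      rw [hsupp]
      exact isOpen_univ.measure_pos volume Set.univ_nonempty
  -- pointwise divergence computation
  have hvd : ∀ x y : EuclideanSpace ℝ (Fin d),
      vdiv (fun y' => φ (t⁻¹ • (x - s • y'))) y
        = (-(t⁻¹ * s)) * vdiv φ (t⁻¹ • (x - s • y)) := by
    intro x y
    have he : (fun y' : EuclideanSpace ℝ (Fin d) => φ (t⁻¹ • (x - s • y')))
        = fun y' => φ ((t⁻¹ • x) + (-(t⁻¹ * s)) • y') := by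
      funext y'
      congr 1
      rw [smul_sub, smul_smul, sub_eq_add_neg, neg_smul]
    have he2 : t⁻¹ • (x - s • y) = (t⁻¹ • x) + (-(t⁻¹ * s)) • y := by
      rw [smul_sub, smul_smul, sub_eq_add_neg, neg_smul]
    rw [he, vdiv_comp hφ, ← he2]
  -- the inner-integral computation for each x
  have hinner : ∀ x : EuclideanSpace ℝ (Fin d),
      μ x * (∫ y, ϱ x y *
        (inner ℝ (φ (t⁻¹ • (x - s • y)))
          (gradient (fun z => Real.log (ϱ x z)) y) : ℝ))
      = (t⁻¹ * s) * (μ x * ∫ y, ϱ x y * vdiv φ (t⁻¹ • (x - s • y))) := by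
    intro x
    rw [hSteinϱ x]
    have h4 : (∫ y, ϱ x y * vdiv (fun y' => φ (t⁻¹ • (x - s • y'))) y)
        = (-(t⁻¹ * s)) * ∫ y, ϱ x y * vdiv φ (t⁻¹ • (x - s • y)) := by
      simp only [hvd]
      rw [← MeasureTheory.integral_const_mul]
      congr 1
      funext y
      ring
    rw [h4]
    ring
  -- a.e. identification with the joint density
  have hae : ∀ᵐ x : EuclideanSpace ℝ (Fin d),
      μ x * (∫ y, ϱ x y * vdiv φ (t⁻¹ • (x - s • y)))
        = ∫ y, (k * p y) * F (t⁻¹ • (x - s • y)) := by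
    filter_upwards [hμae] with x hx
    have h1 : (fun y : EuclideanSpace ℝ (Fin d) => ϱ x y * vdiv φ (t⁻¹ • (x - s • y)))
        = fun y => (μ x)⁻¹ * ((k * p y) * F (t⁻¹ • (x - s • y))) := by
      funext y
      rw [hϱ x y, hFdef, div_eq_mul_inv]
      ring
    rw [h1, MeasureTheory.integral_const_mul, ← mul_assoc, mul_inv_cancel₀ hx.ne', one_mul]
  -- Fubini and change of variables
  have hswap := integral_integral_swap
    (f := fun x y : EuclideanSpace ℝ (Fin d) => (k * p y) * F (t⁻¹ • (x - s • y))) hG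
  have hfin : (∫ y, ∫ x, (k * p y) * F (t⁻¹ • (x - s • y))) = ∫ z, F z := by
    have h5 : ∀ y : EuclideanSpace ℝ (Fin d),
        (∫ x, (k * p y) * F (t⁻¹ • (x - s • y))) = (k * t ^ d * (∫ z, F z)) * p y := by
      intro y
      rw [MeasureTheory.integral_const_mul, hCoV F y]
      ring
    simp_rw [h5]
    rw [MeasureTheory.integral_const_mul, hpprob, mul_one, htd, one_mul]
  -- assemble
  have hL : (∫ x, μ x * ∫ y, ϱ x y *
      (inner ℝ (φ (t⁻¹ • (x - s • y)))
        (gradient (fun z => Real.log (ϱ x z)) y) : ℝ))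
      = (t⁻¹ * s) * ∫ z, F z := by
    rw [integral_congr_ae (Filter.Eventually.of_forall hinner)]
    rw [MeasureTheory.integral_const_mul]
    rw [integral_congr_ae hae, hswap, hfin]
  rw [hL, hSteinν]
  have hsq : Real.sqrt (l / (1 - l)) = s / t := Real.sqrt_div hl0.le (1 - l)
  rw [hsq, hFdef]
  field_simp
end
end

section
/- Let X_λ = √λ X + √(1-λ) σ Z with X ∼ π, Z ∼ N(0, I_d) independent, σ > 0, and let μ̃_λ denote the law of X_λ for λ ∈ (0,1). Then the metric derivative of the curve λ ↦ μ̃_λ in Wasserstein-2 satisfies |μ̃'|_λ² = lim_{δ→0} W_2²(μ̃_λ, μ̃_{λ+δ})/δ² ≤ E_π[‖X‖²]/(4λ) + σ² d/(4(1-λ)). -/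
/-!
Couple the laws at times `l` and `l + δ` through the same pair `(X, Z)`. Since `Z` is a centred
Gaussian independent of `X`, the cross term of the transport cost vanishes, so
`W₂²(μ̃_l, μ̃_{l+δ}) ≤ (√l - √(l+δ))² E‖X‖² + (√(1-l) - √(1-l-δ))² σ² d`.
After division by `δ²` the two difference quotients tend to the derivatives `1 / (2√l)` and
`-σ / (2√(1-l))` of the coefficients.
-/

open MeasureTheory Real ENNReal

noncomputable section

/-- The standard Gaussian N(0, I_d) on d-dimensional Euclidean space. -/
def stdGaussianE (d : ℕ) : Measure (EuclideanSpace ℝ (Fin d)) :=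
  (Measure.pi fun _ : Fin d => ProbabilityTheory.gaussianReal 0 1).map
    (EuclideanSpace.equiv (Fin d) ℝ).symm

/-- Squared Wasserstein-2 distance (as an extended real), defined as the
infimum of the quadratic transport cost over all couplings. -/
def W2sq {d : ℕ} (μ ν : Measure (EuclideanSpace ℝ (Fin d))) : ℝ≥0∞ :=
  ⨅ (γ : Measure (EuclideanSpace ℝ (Fin d) × EuclideanSpace ℝ (Fin d)))
    (_ : γ.map Prod.fst = μ ∧ γ.map Prod.snd = ν),
      ∫⁻ q, (‖q.1 - q.2‖₊ : ℝ≥0∞) ^ 2 ∂γ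

open ProbabilityTheory Filter Topology
open scoped RealInnerProductSpace

lemma stdGaussianE_eq_stdGaussian (d : ℕ) :
    stdGaussianE d = stdGaussian (EuclideanSpace ℝ (Fin d)) :=
  map_pi_eq_stdGaussian

section InnerProductSpace

variable {E : Type*} [NormedAddCommGroup E] [InnerProductSpace ℝ E] [MeasurableSpace E]

lemma integral_norm_sq_stdGaussian [FiniteDimensional ℝ E] [BorelSpace E] :
    ∫ x, ‖x‖ ^ 2 ∂stdGaussian E = Module.finrank ℝ E := by
  set b := stdOrthonormalBasis ℝ E
  have hb : ∀ i, ∫ x, ⟪b i, x⟫ ^ 2 ∂stdGaussian E = 1 := fun i => by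
    have h := covarianceBilin_apply (IsGaussian.memLp_two_id (μ := stdGaussian E)) (b i) (b i)
    simp only [covarianceBilin_stdGaussian, id_eq, integral_id_stdGaussian, sub_zero] at h
    simp_rw [sq]
    rw [← h, innerSL_apply_apply, real_inner_self_eq_norm_sq, b.orthonormal.1 i, one_pow]
  simp_rw [← b.sum_sq_inner_right]
  have hint : ∀ i, Integrable (fun x => ⟪b i, x⟫ ^ 2) (stdGaussian E) := fun i =>
    (IsGaussian.memLp_two_id.const_inner (b i)).integrable_sq
  rw [integral_finsetSum _ fun i _ => hint i]
  simp [hb]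

lemma integral_norm_add_smul_sq {ν : Measure E} [IsProbabilityMeasure ν] [CompleteSpace E]
    (hν : MemLp id 2 ν) (hν0 : ∫ z, z ∂ν = 0) (x : E) (c : ℝ) :
    ∫ z, ‖x + c • z‖ ^ 2 ∂ν = ‖x‖ ^ 2 + c ^ 2 * ∫ z, ‖z‖ ^ 2 ∂ν := by
  have hid : Integrable (fun z => z) ν := hν.integrable one_le_two
  have hinner : Integrable (fun z => ⟪x, z⟫) ν := (hν.const_inner x).integrable one_le_two
  have hnorm : Integrable (fun z => ‖z‖ ^ 2) ν := hν.integrable_norm_pow two_ne_zero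
  have hexp : ∀ z, ‖x + c • z‖ ^ 2 = ‖x‖ ^ 2 + 2 * c * ⟪x, z⟫ + c ^ 2 * ‖z‖ ^ 2 := fun z => by
    rw [norm_add_sq_real, norm_smul, inner_smul_right, mul_pow, Real.norm_eq_abs, sq_abs]
    ring
  have hlin : Integrable (fun z => ‖x‖ ^ 2 + 2 * c * ⟪x, z⟫) ν :=
    (integrable_const _).add (hinner.const_mul _)
  simp_rw [hexp]
  rw [integral_add hlin (hnorm.const_mul _), integral_add (integrable_const _)
    (hinner.const_mul _), integral_const_mul, integral_const_mul, integral_inner hid, hν0]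
  simp

lemma lintegral_prod_enorm_smul_add_smul_sq [CompleteSpace E] [BorelSpace E]
    [SecondCountableTopology E] {μ ν : Measure E} [IsProbabilityMeasure μ]
    [IsProbabilityMeasure ν] (hμ : Integrable (fun x => ‖x‖ ^ 2) μ) (hν : MemLp id 2 ν)
    (hν0 : ∫ z, z ∂ν = 0) (a c : ℝ) :
    ∫⁻ p, ‖a • p.1 + c • p.2‖ₑ ^ 2 ∂μ.prod ν =
      ENNReal.ofReal (a ^ 2 * ∫ x, ‖x‖ ^ 2 ∂μ + c ^ 2 * ∫ z, ‖z‖ ^ 2 ∂ν) := by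
  have hfiber : ∀ x : E, ∫⁻ z, ‖a • x + c • z‖ₑ ^ 2 ∂ν =
      ENNReal.ofReal (a ^ 2 * ‖x‖ ^ 2 + c ^ 2 * ∫ z, ‖z‖ ^ 2 ∂ν) := fun x => by
    have hcost : Integrable (fun z => ‖a • x + c • z‖ ^ 2) ν :=
      ((memLp_const (a • x)).add (hν.const_smul c)).integrable_norm_pow two_ne_zero
    simp_rw [← ofReal_norm, ← ENNReal.ofReal_pow (norm_nonneg _)]
    rw [← ofReal_integral_eq_lintegral_ofReal hcost (ae_of_all _ fun z => by positivity),
      integral_norm_add_smul_sq hν hν0, norm_smul, mul_pow, Real.norm_eq_abs, sq_abs]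
  have hfiber_int : Integrable (fun x => a ^ 2 * ‖x‖ ^ 2 + c ^ 2 * ∫ z, ‖z‖ ^ 2 ∂ν) μ :=
    (hμ.const_mul _).add (integrable_const _)
  rw [lintegral_prod _ (by fun_prop), lintegral_congr fun x => hfiber x,
    ← ofReal_integral_eq_lintegral_ofReal hfiber_int (ae_of_all _ fun x => ?_),
    integral_add (hμ.const_mul _) (integrable_const _), integral_const_mul, integral_const]
  · simp
  · have : 0 ≤ ∫ z, ‖z‖ ^ 2 ∂ν := integral_nonneg fun z => by positivity
    positivity

end InnerProductSpace

lemma W2sq_map_le {d : ℕ} {Ω : Type*} [MeasurableSpace Ω] (P : Measure Ω)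
    {f g : Ω → EuclideanSpace ℝ (Fin d)} (hf : Measurable f) (hg : Measurable g) :
    W2sq (P.map f) (P.map g) ≤ ∫⁻ ω, ‖f ω - g ω‖ₑ ^ 2 ∂P := by
  have hfg : Measurable fun ω => (f ω, g ω) := hf.prodMk hg
  have hfst : (P.map fun ω => (f ω, g ω)).map Prod.fst = P.map f := by
    rw [Measure.map_map measurable_fst hfg]; rfl
  have hsnd : (P.map fun ω => (f ω, g ω)).map Prod.snd = P.map g := by
    rw [Measure.map_map measurable_snd hfg]; rfl
  rw [W2sq]
  refine (iInf₂_le _ ⟨hfst, hsnd⟩).trans_eq ?_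
  exact lintegral_map (by fun_prop) hfg

lemma HasDerivAt.tendsto_sq_slope {f : ℝ → ℝ} {f' x : ℝ} (hf : HasDerivAt f f' x) :
    Tendsto (fun δ => (f (x + δ) - f x) ^ 2 / δ ^ 2) (𝓝[≠] 0) (𝓝 (f' ^ 2)) :=
  ((hasDerivAt_iff_tendsto_slope_zero.1 hf).pow 2).congr fun δ => by
    simp only [smul_eq_mul]; ring

lemma limsup_div_sq_le_of_le_ofReal {u : ℝ → ℝ≥0∞} {v : ℝ → ℝ} {L : ℝ}
    (hu : ∀ δ, u δ ≤ ENNReal.ofReal (v δ))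
    (hv : Tendsto (fun δ => v δ / δ ^ 2) (𝓝[≠] 0) (𝓝 L)) :
    limsup (fun δ => u δ / ENNReal.ofReal (δ ^ 2)) (𝓝[≠] 0) ≤ ENNReal.ofReal L := by
  have hbound : ∀ᶠ δ in 𝓝[≠] (0 : ℝ),
      u δ / ENNReal.ofReal (δ ^ 2) ≤ ENNReal.ofReal (v δ / δ ^ 2) :=
    eventually_mem_nhdsWithin.mono fun δ (hδ : δ ≠ 0) => by
      rw [ENNReal.ofReal_div_of_pos (by positivity)]
      exact ENNReal.div_le_div_right (hu δ) _
  exact (limsup_le_limsup hbound).trans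
    ((ENNReal.continuous_ofReal.tendsto L).comp hv).limsup_eq.le

theorem metric_derivative_bound_general
    (d : ℕ) (σ : ℝ) (l : ℝ) (hl : l ∈ Set.Ioo (0 : ℝ) 1)
    {Ω : Type*} [MeasureSpace Ω] (P : Measure Ω) [IsProbabilityMeasure P]
    (X Z : Ω → EuclideanSpace ℝ (Fin d))
    (hX : Measurable X) (hZ : Measurable Z)
    (hindep : ProbabilityTheory.IndepFun X Z P)
    (πm : Measure (EuclideanSpace ℝ (Fin d))) [IsProbabilityMeasure πm]
    (hlawX : P.map X = πm)
    (hlawZ : P.map Z = stdGaussianE d)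
    (M2 : ℝ) (hM2int : Integrable (fun x => ‖x‖ ^ 2) πm)
    (hM2 : M2 = ∫ x, ‖x‖ ^ 2 ∂πm)
    (pathLaw : ℝ → Measure (EuclideanSpace ℝ (Fin d)))
    (hpath : ∀ s : ℝ, pathLaw s =
      P.map (fun ω => Real.sqrt s • X ω + (Real.sqrt (1 - s) * σ) • Z ω)) :
    Filter.limsup
        (fun δ : ℝ => W2sq (pathLaw l) (pathLaw (l + δ)) / ENNReal.ofReal (δ ^ 2))
        (nhdsWithin 0 {(0 : ℝ)}ᶜ) ≤
      ENNReal.ofReal (M2 / (4 * l) + σ ^ 2 * d / (4 * (1 - l))) := by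
  obtain ⟨hl0, hl1⟩ := hl
  rw [stdGaussianE_eq_stdGaussian] at hlawZ
  set γ := stdGaussian (EuclideanSpace ℝ (Fin d))
  have hjoint : P.map (fun ω => (X ω, Z ω)) = πm.prod γ := by
    rw [← hlawX, ← hlawZ]
    exact (indepFun_iff_map_prod_eq_prod_map_map hX.aemeasurable hZ.aemeasurable).1 hindep
  set f : ℝ → ℝ := fun s => √s
  set g : ℝ → ℝ := fun s => √(1 - s) * σ
  have hlaw : ∀ s, pathLaw s = (πm.prod γ).map fun p => f s • p.1 + g s • p.2 := fun s => by
    rw [hpath, ← hjoint, Measure.map_map (by fun_prop) (by fun_prop)]; rfl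
  have hcost : ∀ δ, W2sq (pathLaw l) (pathLaw (l + δ)) ≤
      ENNReal.ofReal ((f l - f (l + δ)) ^ 2 * M2 + (g l - g (l + δ)) ^ 2 * d) := fun δ => by
    rw [hlaw, hlaw]
    refine (W2sq_map_le _ (by fun_prop) (by fun_prop)).trans_eq ?_
    simp_rw [add_sub_add_comm, ← sub_smul]
    rw [lintegral_prod_enorm_smul_add_smul_sq hM2int IsGaussian.memLp_two_id
      integral_id_stdGaussian, integral_norm_sq_stdGaussian, finrank_euclideanSpace_fin, hM2]
  have hf : HasDerivAt f (1 / (2 * √l)) l := Real.hasDerivAt_sqrt hl0.ne'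
  have hg : HasDerivAt g (-(1 / (2 * √(1 - l))) * σ) l := by
    simpa using ((Real.hasDerivAt_sqrt (by linarith : 1 - l ≠ 0)).comp l
      ((hasDerivAt_id l).const_sub 1)).mul_const σ
  have hlim := (hf.tendsto_sq_slope.mul_const M2).add (hg.tendsto_sq_slope.mul_const (d : ℝ))
  have hvalue : (1 / (2 * √l)) ^ 2 * M2 + (-(1 / (2 * √(1 - l))) * σ) ^ 2 * d =
      M2 / (4 * l) + σ ^ 2 * d / (4 * (1 - l)) := by
    rw [neg_mul, neg_sq, mul_pow, div_pow, div_pow, mul_pow, mul_pow, sq_sqrt hl0.le,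
      sq_sqrt (by linarith)]
    ring
  rw [← hvalue]
  refine limsup_div_sq_le_of_le_ofReal hcost (hlim.congr fun δ => ?_)
  rw [sub_sq_comm (f l), sub_sq_comm (g l)]
  ring

/-- **Metric-derivative bound along the diffusion path.** -/
theorem metric_derivative_bound
    (d : ℕ) (σ : ℝ) (hσ : 0 < σ) (l : ℝ) (hl : l ∈ Set.Ioo (0 : ℝ) 1)
    {Ω : Type*} [MeasureSpace Ω] (P : Measure Ω) [IsProbabilityMeasure P]
    (X Z : Ω → EuclideanSpace ℝ (Fin d))
    (hX : Measurable X) (hZ : Measurable Z)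
    (hindep : ProbabilityTheory.IndepFun X Z P)
    (πm : Measure (EuclideanSpace ℝ (Fin d))) [IsProbabilityMeasure πm]
    (hlawX : P.map X = πm)
    (hlawZ : P.map Z = stdGaussianE d)
    (M2 : ℝ) (hM2int : Integrable (fun x => ‖x‖ ^ 2) πm)
    (hM2 : M2 = ∫ x, ‖x‖ ^ 2 ∂πm)
    (pathLaw : ℝ → Measure (EuclideanSpace ℝ (Fin d)))
    (hpath : ∀ s : ℝ, pathLaw s =
      P.map (fun ω => Real.sqrt s • X ω + (Real.sqrt (1 - s) * σ) • Z ω)) :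
    Filter.limsup
        (fun δ : ℝ => W2sq (pathLaw l) (pathLaw (l + δ)) / ENNReal.ofReal (δ ^ 2))
        (nhdsWithin 0 {(0 : ℝ)}ᶜ) ≤
      ENNReal.ofReal (M2 / (4 * l) + σ ^ 2 * d / (4 * (1 - l))) :=
  metric_derivative_bound_general d σ l hl P X Z hX hZ hindep πm hlawX hlawZ M2 hM2int hM2 pathLaw
    hpath
end
end

section
/- The functional J[λ] = ∫_0^1 (λ̇_t)² / (λ_t (1 − λ_t)) dt over C¹ curves λ : [0,1] → (0,1) with boundary values λ_0 = 0, λ_1 = 1 is convex, and its unique minimiser is the cosine schedule λ_t = sin²(π t / 2), at which J attains the value π². -/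
open MeasureTheory Real Set

noncomputable section

/-- The action upper-bound functional J[λ] = ∫₀¹ λ̇² / (λ(1-λ)) dt. -/
def Jfun (f : ℝ → ℝ) : ℝ :=
  ∫ t in (0 : ℝ)..1, (deriv f t) ^ 2 / (f t * (1 - f t))

/-- Admissible C¹ schedules with boundary values 0 and 1, interior values in
(0,1), and finite action upper bound. -/
def Admissible : Set (ℝ → ℝ) :=
  {f | ContDiffOn ℝ 1 f (Icc (0 : ℝ) 1) ∧ f 0 = 0 ∧ f 1 = 1 ∧
    (∀ t ∈ Ioo (0 : ℝ) 1, f t ∈ Ioo (0 : ℝ) 1) ∧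
    IntervalIntegrable (fun t => (deriv f t) ^ 2 / (f t * (1 - f t)))
      volume 0 1}

/-- The cosine schedule. -/
def cosSchedule : ℝ → ℝ := fun t => Real.sin (Real.pi * t / 2) ^ 2

/-!
Write `φ = λ̇ / √(λ(1-λ))` for the derivative of `arcsin (2λ - 1)`. Then
`φ² = λ̇²/(λ(1-λ))` and, by the boundary values, `∫₀¹ φ = arcsin 1 - arcsin (-1) = π`,
so `J[λ] - π² = ∫₀¹ (φ - π)² ≥ 0`. Equality forces `φ ≡ π`, i.e.
`arcsin (2λ_t - 1) = π t - π/2`, which is the cosine schedule; and the cosine schedule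
does have `φ ≡ π`.

Convexity is pointwise: `(λ, v) ↦ v²/(λ(1-λ))` is the perspective `(p, v) ↦ v²/p`,
jointly convex and antitone in `p`, composed with the concave map `λ ↦ λ(1-λ)`.
-/

def actionIntegrand (f : ℝ → ℝ) (t : ℝ) : ℝ := deriv f t ^ 2 / (f t * (1 - f t))

def arcsinSpeed (f : ℝ → ℝ) (t : ℝ) : ℝ := deriv f t / √(f t * (1 - f t))

lemma Jfun_eq_integral_actionIntegrand (f : ℝ → ℝ) :
    Jfun f = ∫ t in (0 : ℝ)..1, actionIntegrand f t := rfl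

lemma intervalIntegrable_actionIntegrand {f : ℝ → ℝ} (hf : f ∈ Admissible) :
    IntervalIntegrable (actionIntegrand f) volume 0 1 :=
  hf.2.2.2.2

lemma arcsinSpeed_sq {f : ℝ → ℝ} {t : ℝ} (ht : 0 ≤ f t * (1 - f t)) :
    arcsinSpeed f t ^ 2 = actionIntegrand f t := by
  rw [arcsinSpeed, actionIntegrand, div_pow, sq_sqrt ht]

lemma HasDerivAt.arcsin_two_mul_sub_one {f : ℝ → ℝ} {f' t : ℝ} (hf : HasDerivAt f f' t)
    (ht : f t ∈ Ioo (0 : ℝ) 1) :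
    HasDerivAt (fun s => arcsin (2 * f s - 1)) (f' / √(f t * (1 - f t))) t := by
  obtain ⟨h0, h1⟩ := ht
  have hroot : √(1 - (2 * f t - 1) ^ 2) = 2 * √(f t * (1 - f t)) := by
    rw [show 1 - (2 * f t - 1) ^ 2 = 2 ^ 2 * (f t * (1 - f t)) by ring,
      sqrt_mul (by positivity), sqrt_sq zero_le_two]
  have hpos : 0 < √(f t * (1 - f t)) := sqrt_pos.2 (by nlinarith)
  refine ((hasDerivAt_arcsin (by linarith) (by linarith)).comp t
    ((hf.const_mul 2).sub_const 1)).congr_deriv ?_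
  rw [hroot]
  field_simp

lemma mem_Icc_of_mem_admissible {f : ℝ → ℝ} (hf : f ∈ Admissible) {t : ℝ}
    (ht : t ∈ Icc (0 : ℝ) 1) : f t ∈ Icc (0 : ℝ) 1 := by
  obtain ⟨-, hf0, hf1, hmem, -⟩ := hf
  rcases ht.1.eq_or_lt with rfl | ht0
  · simp [hf0]
  rcases ht.2.eq_or_lt with rfl | ht1
  · simp [hf1]
  exact Ioo_subset_Icc_self (hmem t ⟨ht0, ht1⟩)

lemma differentiableAt_of_mem_admissible {f : ℝ → ℝ} (hf : f ∈ Admissible) {t : ℝ}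
    (ht : t ∈ Ioo (0 : ℝ) 1) : DifferentiableAt ℝ f t :=
  (hf.1.differentiableOn one_ne_zero).differentiableAt (Icc_mem_nhds ht.1 ht.2)

lemma continuousOn_arcsinSpeed {f : ℝ → ℝ} (hf : f ∈ Admissible) :
    ContinuousOn (arcsinSpeed f) (Ioo (0 : ℝ) 1) := by
  obtain ⟨hC, -, -, hmem, -⟩ := hf
  have hf' : ContinuousOn f (Ioo (0 : ℝ) 1) := hC.continuousOn.mono Ioo_subset_Icc_self
  refine ((hC.mono Ioo_subset_Icc_self).continuousOn_deriv_of_isOpen isOpen_Ioo le_rfl).div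
    (hf'.mul (continuousOn_const.sub hf')).sqrt fun t ht => ?_
  obtain ⟨h0, h1⟩ := hmem t ht
  exact (sqrt_pos.2 (by nlinarith)).ne'

lemma hasDerivAt_arcsin_of_mem_admissible {f : ℝ → ℝ} (hf : f ∈ Admissible) {t : ℝ}
    (ht : t ∈ Ioo (0 : ℝ) 1) :
    HasDerivAt (fun s => arcsin (2 * f s - 1)) (arcsinSpeed f t) t :=
  (differentiableAt_of_mem_admissible hf ht).hasDerivAt.arcsin_two_mul_sub_one
    (hf.2.2.2.1 t ht)

lemma continuousOn_arcsin_of_mem_admissible {f : ℝ → ℝ} (hf : f ∈ Admissible) :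
    ContinuousOn (fun s => arcsin (2 * f s - 1)) (Icc (0 : ℝ) 1) :=
  continuous_arcsin.comp_continuousOn ((continuousOn_const.mul hf.1.continuousOn).sub
    continuousOn_const)

lemma intervalIntegrable_arcsinSpeed {f : ℝ → ℝ} (hf : f ∈ Admissible) :
    IntervalIntegrable (arcsinSpeed f) volume 0 1 := by
  -- its square is the integrand of `Jfun`, and `L² ⊆ L¹` on a bounded interval
  rw [intervalIntegrable_iff_integrableOn_Ioo_of_le zero_le_one]
  have hmeas :=
    (continuousOn_arcsinSpeed hf).aestronglyMeasurable (μ := volume) measurableSet_Ioo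
  refine ((memLp_two_iff_integrable_sq hmeas).2 ?_).integrable one_le_two
  have hI := (intervalIntegrable_iff_integrableOn_Ioo_of_le zero_le_one).1
    (intervalIntegrable_actionIntegrand hf)
  refine hI.congr_fun (fun t ht => ?_) measurableSet_Ioo
  obtain ⟨h0, h1⟩ := hf.2.2.2.1 t ht
  exact (arcsinSpeed_sq (by nlinarith)).symm

lemma integral_arcsinSpeed {f : ℝ → ℝ} (hf : f ∈ Admissible) :
    ∫ t in (0 : ℝ)..1, arcsinSpeed f t = π := by
  rw [intervalIntegral.integral_eq_sub_of_hasDerivAt_of_le zero_le_one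
    (continuousOn_arcsin_of_mem_admissible hf)
    (fun t ht => hasDerivAt_arcsin_of_mem_admissible hf ht)
    (intervalIntegrable_arcsinSpeed hf), hf.2.1, hf.2.2.1]
  norm_num

lemma arcsinSpeed_sub_pi_sq_eqOn {f : ℝ → ℝ} (hf : f ∈ Admissible) :
    EqOn (fun t => (arcsinSpeed f t - π) ^ 2)
      (fun t => actionIntegrand f t - 2 * π * arcsinSpeed f t + π ^ 2) (uIcc 0 1) := by
  -- at the endpoints `f t * (1 - f t) = 0`, and both sides of `arcsinSpeed_sq` are junk zeros
  intro t ht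
  rw [uIcc_of_le zero_le_one] at ht
  obtain ⟨h0, h1⟩ := mem_Icc_of_mem_admissible hf ht
  simp only [← arcsinSpeed_sq (f := f) (t := t) (by nlinarith)]
  ring

lemma intervalIntegrable_arcsinSpeed_sub_pi_sq {f : ℝ → ℝ} (hf : f ∈ Admissible) :
    IntervalIntegrable (fun t => (arcsinSpeed f t - π) ^ 2) volume 0 1 :=
  (((intervalIntegrable_actionIntegrand hf).sub
    ((intervalIntegrable_arcsinSpeed hf).const_mul _)).add intervalIntegrable_const).congr
    ((arcsinSpeed_sub_pi_sq_eqOn hf).symm.mono uIoc_subset_uIcc)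

lemma integral_arcsinSpeed_sub_pi_sq {f : ℝ → ℝ} (hf : f ∈ Admissible) :
    ∫ t in (0 : ℝ)..1, (arcsinSpeed f t - π) ^ 2 = Jfun f - π ^ 2 := by
  have hI := intervalIntegrable_actionIntegrand hf
  have hφ := (intervalIntegrable_arcsinSpeed hf).const_mul (2 * π)
  rw [intervalIntegral.integral_congr (arcsinSpeed_sub_pi_sq_eqOn hf),
    intervalIntegral.integral_add (hI.sub hφ) intervalIntegrable_const,
    intervalIntegral.integral_sub hI hφ, intervalIntegral.integral_const_mul,
    integral_arcsinSpeed hf, ← Jfun_eq_integral_actionIntegrand]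
  simp only [intervalIntegral.integral_const, sub_zero, smul_eq_mul, one_mul]
  ring

lemma pi_sq_le_Jfun {f : ℝ → ℝ} (hf : f ∈ Admissible) : π ^ 2 ≤ Jfun f := by
  have := intervalIntegral.integral_nonneg (μ := volume) zero_le_one fun t _ =>
    sq_nonneg (arcsinSpeed f t - π)
  linarith [integral_arcsinSpeed_sub_pi_sq hf]

lemma arcsinSpeed_eq_pi {f : ℝ → ℝ} (hf : f ∈ Admissible) (hJ : Jfun f = π ^ 2) :
    EqOn (arcsinSpeed f) (fun _ => π) (Ioo (0 : ℝ) 1) := by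
  have hzero : ∫ t in (0 : ℝ)..1, (arcsinSpeed f t - π) ^ 2 = 0 := by
    rw [integral_arcsinSpeed_sub_pi_sq hf, hJ, sub_self]
  rw [intervalIntegral.integral_eq_zero_iff_of_nonneg_ae
    (Filter.Eventually.of_forall fun t => sq_nonneg _)
    (intervalIntegrable_arcsinSpeed_sub_pi_sq hf)] at hzero
  have hae : (fun t => (arcsinSpeed f t - π) ^ 2) =ᵐ[volume.restrict (Ioo 0 1)] 0 :=
    ae_restrict_of_ae_restrict_of_subset (Ioo_subset_Ioc_self.trans subset_union_left) hzero
  intro t ht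
  have := Measure.eqOn_open_of_ae_eq hae isOpen_Ioo
    (((continuousOn_arcsinSpeed hf).sub continuousOn_const).pow 2) continuousOn_const ht
  simpa [sub_eq_zero] using this

lemma cosSchedule_eq (t : ℝ) : cosSchedule t = (1 - cos (π * t)) / 2 := by
  rw [cosSchedule, sin_sq_eq_half_sub, mul_div_cancel₀ _ two_ne_zero]
  ring

lemma eqOn_cosSchedule_of_Jfun_eq {f : ℝ → ℝ} (hf : f ∈ Admissible) (hJ : Jfun f = π ^ 2) :
    EqOn f cosSchedule (Icc (0 : ℝ) 1) := by
  intro t ht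
  have harcsin : arcsin (2 * f t - 1) = π * t - π / 2 := by
    rcases ht.1.eq_or_lt with rfl | ht0
    · simp [hf.2.1]
    obtain ⟨c, hc, hslope⟩ := exists_hasDerivAt_eq_slope (fun s => arcsin (2 * f s - 1))
      (arcsinSpeed f) ht0
      ((continuousOn_arcsin_of_mem_admissible hf).mono (Icc_subset_Icc_right ht.2))
      fun s hs => hasDerivAt_arcsin_of_mem_admissible hf ⟨hs.1, hs.2.trans_le ht.2⟩
    rw [arcsinSpeed_eq_pi hf hJ ⟨hc.1, hc.2.trans_le ht.2⟩, hf.2.1, sub_zero,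
      eq_div_iff ht0.ne'] at hslope
    simp only [mul_zero, zero_sub, arcsin_neg_one] at hslope
    linarith
  obtain ⟨h0, h1⟩ := mem_Icc_of_mem_admissible hf ht
  have := sin_arcsin (x := 2 * f t - 1) (by linarith) (by linarith)
  rw [harcsin, sin_sub_pi_div_two] at this
  rw [cosSchedule_eq]
  linarith

lemma hasDerivAt_cosSchedule (t : ℝ) : HasDerivAt cosSchedule (π * sin (π * t) / 2) t := by
  rw [show cosSchedule = fun t => (1 - cos (π * t)) / 2 from funext cosSchedule_eq]
  refine ((((hasDerivAt_id' t).const_mul π).cos.const_sub 1).div_const 2).congr_deriv ?_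
  ring

lemma cosSchedule_mul_one_sub (t : ℝ) :
    cosSchedule t * (1 - cosSchedule t) = (sin (π * t) / 2) ^ 2 := by
  rw [cosSchedule_eq, div_pow, sin_sq]
  ring

lemma sin_pi_mul_pos {t : ℝ} (ht : t ∈ Ioo (0 : ℝ) 1) : 0 < sin (π * t) :=
  sin_pos_of_pos_of_lt_pi (by nlinarith [pi_pos, ht.1]) (by nlinarith [pi_pos, ht.2])

lemma actionIntegrand_cosSchedule {t : ℝ} (ht : t ∈ Ioo (0 : ℝ) 1) :
    actionIntegrand cosSchedule t = π ^ 2 := by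
  have hsin := sin_pi_mul_pos ht
  rw [actionIntegrand, (hasDerivAt_cosSchedule t).deriv, cosSchedule_mul_one_sub]
  field_simp

lemma cosSchedule_mem_Ioo {t : ℝ} (ht : t ∈ Ioo (0 : ℝ) 1) :
    cosSchedule t ∈ Ioo (0 : ℝ) 1 := by
  have hcos : cos (π * t) ^ 2 < 1 := by
    nlinarith [sin_pi_mul_pos ht, sin_sq_add_cos_sq (π * t)]
  rw [cosSchedule_eq]
  constructor <;> nlinarith

lemma cosSchedule_mem_admissible : cosSchedule ∈ Admissible := by
  refine ⟨?_, by simp [cosSchedule], by simp [cosSchedule_eq],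
    fun t ht => cosSchedule_mem_Ioo ht, ?_⟩
  · exact ContDiff.contDiffOn (by unfold cosSchedule; fun_prop)
  · exact (intervalIntegrable_const (c := π ^ 2)).congr_uIoo fun t ht =>
      (actionIntegrand_cosSchedule (by rwa [uIoo_of_le zero_le_one] at ht)).symm

lemma Jfun_cosSchedule : Jfun cosSchedule = π ^ 2 := by
  rw [Jfun_eq_integral_actionIntegrand,
    intervalIntegral.integral_congr_Ioo_of_le zero_le_one
      fun t ht => actionIntegrand_cosSchedule ht]
  simp

lemma convexOn_sq_div : ConvexOn ℝ (Ioi (0 : ℝ) ×ˢ univ) fun q : ℝ × ℝ => q.2 ^ 2 / q.1 := by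
  refine ⟨(convex_Ioi 0).prod convex_univ, ?_⟩
  rintro ⟨p, u⟩ ⟨hp, -⟩ ⟨q, v⟩ ⟨hq, -⟩ a b ha hb hab
  simp only [mem_Ioi] at hp hq
  simp only [Prod.smul_mk, Prod.mk_add_mk, smul_eq_mul]
  have hpq : 0 < a * p + b * q := by
    rcases ha.eq_or_lt with rfl | ha'
    · simp_all
    · positivity
  rw [div_le_iff₀ hpq]
  have key : (a * (u ^ 2 / p) + b * (v ^ 2 / q)) * (a * p + b * q) - (a * u + b * v) ^ 2
      = a * b * (u * q - v * p) ^ 2 / (p * q) := by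
    obtain rfl : b = 1 - a := by linarith
    field_simp
    ring
  have : 0 ≤ a * b * (u * q - v * p) ^ 2 / (p * q) := by positivity
  linarith

lemma convexOn_sq_div_mul_one_sub :
    ConvexOn ℝ (Ioo (0 : ℝ) 1 ×ˢ univ) fun q : ℝ × ℝ => q.2 ^ 2 / (q.1 * (1 - q.1)) := by
  refine ⟨(convex_Ioo 0 1).prod convex_univ, ?_⟩
  rintro ⟨x, u⟩ ⟨⟨hx0, hx1⟩, -⟩ ⟨y, v⟩ ⟨⟨hy0, hy1⟩, -⟩ a b ha hb hab
  simp only [Prod.smul_mk, Prod.mk_add_mk, smul_eq_mul]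
  have hP : 0 < x * (1 - x) := by nlinarith
  have hQ : 0 < y * (1 - y) := by nlinarith
  have hR : 0 < a * (x * (1 - x)) + b * (y * (1 - y)) := by
    rcases ha.eq_or_lt with rfl | ha'
    · simp_all
    · positivity
  have concave :
      a * (x * (1 - x)) + b * (y * (1 - y)) ≤ (a * x + b * y) * (1 - (a * x + b * y)) := by
    have : (a * x + b * y) * (1 - (a * x + b * y)) - (a * (x * (1 - x)) + b * (y * (1 - y)))
        = a * b * (x - y) ^ 2 := by
      linear_combination (-(a * x ^ 2 + b * y ^ 2)) * hab
    nlinarith [mul_nonneg (mul_nonneg ha hb) (sq_nonneg (x - y))]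
  calc (a * u + b * v) ^ 2 / ((a * x + b * y) * (1 - (a * x + b * y)))
      ≤ (a * u + b * v) ^ 2 / (a * (x * (1 - x)) + b * (y * (1 - y))) := by gcongr
    _ ≤ a * (u ^ 2 / (x * (1 - x))) + b * (v ^ 2 / (y * (1 - y))) := by
      simpa using convexOn_sq_div.2 (x := (x * (1 - x), u)) (y := (y * (1 - y), v))
        ⟨hP, trivial⟩ ⟨hQ, trivial⟩ ha hb hab

lemma continuousOn_actionIntegrand {f : ℝ → ℝ} (hf : ContDiffOn ℝ 1 f (Icc (0 : ℝ) 1))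
    (hmem : ∀ t ∈ Ioo (0 : ℝ) 1, f t ∈ Ioo (0 : ℝ) 1) :
    ContinuousOn (actionIntegrand f) (Ioo (0 : ℝ) 1) := by
  have hf' : ContinuousOn f (Ioo (0 : ℝ) 1) := hf.continuousOn.mono Ioo_subset_Icc_self
  have hderiv := (hf.mono Ioo_subset_Icc_self).continuousOn_deriv_of_isOpen isOpen_Ioo le_rfl
  refine (hderiv.pow 2).div (hf'.mul (continuousOn_const.sub hf')) fun t ht => ?_
  obtain ⟨h0, h1⟩ := hmem t ht
  nlinarith

lemma actionIntegrand_smul_add_smul_le {f g : ℝ → ℝ} (hf : f ∈ Admissible)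
    (hg : g ∈ Admissible) {a b : ℝ} (ha : 0 ≤ a) (hb : 0 ≤ b) (hab : a + b = 1) {t : ℝ}
    (ht : t ∈ Ioo (0 : ℝ) 1) :
    actionIntegrand (a • f + b • g) t ≤ a * actionIntegrand f t + b * actionIntegrand g t := by
  have hderiv : deriv (a • f + b • g) t = a * deriv f t + b * deriv g t :=
    (((differentiableAt_of_mem_admissible hf ht).hasDerivAt.const_mul a).add
      ((differentiableAt_of_mem_admissible hg ht).hasDerivAt.const_mul b)).deriv
  simpa [actionIntegrand, hderiv] using convexOn_sq_div_mul_one_sub.2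
    (x := (f t, deriv f t)) (y := (g t, deriv g t)) ⟨hf.2.2.2.1 t ht, trivial⟩
    ⟨hg.2.2.2.1 t ht, trivial⟩ ha hb hab

lemma convex_admissible : Convex ℝ Admissible := by
  intro f hf g hg a b ha hb hab
  have hC : ContDiffOn ℝ 1 (a • f + b • g) (Icc (0 : ℝ) 1) :=
    (hf.1.const_smul a).add (hg.1.const_smul b)
  have hmem : ∀ t ∈ Ioo (0 : ℝ) 1, (a • f + b • g) t ∈ Ioo (0 : ℝ) 1 := fun t ht =>
    convex_Ioo 0 1 (hf.2.2.2.1 t ht) (hg.2.2.2.1 t ht) ha hb hab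
  refine ⟨hC, by simp [hf.2.1, hg.2.1], by simp [hf.2.2.1, hg.2.2.1, hab], hmem, ?_⟩
  rw [intervalIntegrable_iff_integrableOn_Ioo_of_le zero_le_one]
  have hbound := (intervalIntegrable_iff_integrableOn_Ioo_of_le zero_le_one).1
    (((intervalIntegrable_actionIntegrand hf).const_mul a).add
      ((intervalIntegrable_actionIntegrand hg).const_mul b))
  refine hbound.mono' ((continuousOn_actionIntegrand hC hmem).aestronglyMeasurable
    measurableSet_Ioo) ((ae_restrict_mem measurableSet_Ioo).mono fun t ht => ?_)
  obtain ⟨h0, h1⟩ := hmem t ht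
  rw [norm_of_nonneg (div_nonneg (sq_nonneg _) (by nlinarith))]
  exact actionIntegrand_smul_add_smul_le hf hg ha hb hab ht

lemma convexOn_Jfun : ConvexOn ℝ Admissible Jfun := by
  refine ⟨convex_admissible, fun f hf g hg a b ha hb hab => ?_⟩
  have hIf := (intervalIntegrable_actionIntegrand hf).const_mul a
  have hIg := (intervalIntegrable_actionIntegrand hg).const_mul b
  simp only [Jfun_eq_integral_actionIntegrand, smul_eq_mul,
    ← intervalIntegral.integral_const_mul, ← intervalIntegral.integral_add hIf hIg]
  exact intervalIntegral.integral_mono_on_of_le_Ioo zero_le_one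
    (intervalIntegrable_actionIntegrand (convex_admissible hf hg ha hb hab)) (hIf.add hIg)
    fun t ht => actionIntegrand_smul_add_smul_le hf hg ha hb hab ht

/-- **The functional J is convex and is uniquely minimised by the cosine
schedule, at which it attains the value π².** -/
theorem cosine_schedule_minimises_action_bound :
    ConvexOn ℝ Admissible Jfun ∧
    cosSchedule ∈ Admissible ∧
    (∀ f ∈ Admissible, Jfun cosSchedule ≤ Jfun f) ∧
    (∀ f ∈ Admissible, Jfun f = Jfun cosSchedule →
      Set.EqOn f cosSchedule (Icc (0 : ℝ) 1)) ∧
    Jfun cosSchedule = Real.pi ^ 2 := by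
  refine ⟨convexOn_Jfun, cosSchedule_mem_admissible, fun f hf => ?_,
    fun f hf hJ => eqOn_cosSchedule_of_Jfun_eq hf (hJ.trans Jfun_cosSchedule), Jfun_cosSchedule⟩
  exact Jfun_cosSchedule ▸ pi_sq_le_Jfun hf
end
end
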